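/- Let α₁, β₁, α₂, β₂ ∈ ℝ with α_i ≤ β_i for i = 1,2, and let f₁, f₂ : (0,2) → ℝ with f₁ ∈ Q_{α₁,β₁} and f₂ ∈ Q_{α₂,β₂}. Then the pointwise product f₁·f₂ belongs to Q_{α₁+α₂, min(α₁+β₂, α₂+β₁)}. -/

import Mathlib

open Set

noncomputable section

/-- `P_{α,β}`: finite sums of real powers `t^{α_i}` on `(0,2)`, where integer exponents
exceed `α` and non-integer exponents exceed `β`. -/
def Pclass (α β : ℝ) : Set (ℝ → ℝ) :=
  { f | ∃ (n : ℕ) (a : Fin n → ℝ) (e : Fin n → ℝ),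
      (∀ i, (∃ z : ℤ, e i = (z : ℝ)) → α < e i) ∧
      (∀ i, (¬ ∃ z : ℤ, e i = (z : ℝ)) → β < e i) ∧
      (∀ t ∈ Set.Ioo (0 : ℝ) 2, f t = ∑ i, a i * t ^ (e i)) }

/-- `R_{γ'}`: functions that are `C^∞` on `(0,2)` and whose `m`-th derivatives are
`O(t^{γ'-m})` as `t ↓ 0`. -/
def Rclass (γ' : ℝ) : Set (ℝ → ℝ) :=
  { f | ContDiffOn ℝ (⊤ : ℕ∞) f (Set.Ioo (0 : ℝ) 2) ∧
      ∀ m : ℕ, ∃ C : ℝ, ∃ ε > (0 : ℝ), ∀ t ∈ Set.Ioo (0 : ℝ) (min ε 2),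
        |iteratedDerivWithin m f (Set.Ioo (0 : ℝ) 2) t| ≤ C * t ^ (γ' - m) }

/-- `Q_{α,β} = ∩_{γ'} (P_{α,β} + R_{γ'})` (as functions on `(0,2)`). -/
def Qclass (α β : ℝ) : Set (ℝ → ℝ) :=
  { f | ∀ γ' : ℝ, ∃ p ∈ Pclass α β, ∃ r ∈ Rclass γ',
      ∀ t ∈ Set.Ioo (0 : ℝ) 2, f t = p t + r t }

/-!
Write `fᵢ = pᵢ + rᵢ` with `pᵢ ∈ P_{αᵢ,βᵢ}` and remainders `rᵢ` of high order. The product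
`p₁ p₂` is again a sum of powers, and lies in `P_{α₁+α₂, min(α₁+β₂, α₂+β₁)}` because a sum of two
exponents can only be a non-integer if one of them is. Since every exponent of `p ∈ P_{α,β}`
exceeds `α ≤ β`, we have `p ∈ R_α`, and the Leibniz rule gives `R_γ · R_δ ⊆ R_{γ+δ}`; so the cross
terms `p₁ r₂`, `r₁ p₂`, `r₁ r₂` all lie in `R_γ'` once the orders of `r₁`, `r₂` are large enough.
-/

open Filter Asymptotics Topology

lemma iteratedDeriv_rpow_const (e : ℝ) (m : ℕ) {x : ℝ} (hx : 0 < x) :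
    iteratedDeriv m (fun t : ℝ => t ^ e) x = (∏ k ∈ Finset.range m, (e - k)) * x ^ (e - m) := by
  induction m generalizing x with
  | zero => simp
  | succ m ih =>
    have h_eq : iteratedDeriv m (fun t : ℝ => t ^ e) =ᶠ[𝓝 x]
        fun t => (∏ k ∈ Finset.range m, (e - k)) * t ^ (e - m) :=
      eventually_gt_nhds hx |>.mono fun y hy => ih hy
    have h_deriv : HasDerivAt (fun t : ℝ => t ^ (e - m)) ((e - m) * x ^ (e - m - 1)) x :=
      Real.hasDerivAt_rpow_const (Or.inl hx.ne')
    rw [iteratedDeriv_succ, h_eq.deriv_eq, (h_deriv.const_mul _).deriv, Finset.prod_range_succ]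
    push_cast
    ring_nf

lemma isBigO_rpow_rpow_nhdsGT_zero {a b : ℝ} (h : a ≤ b) :
    (fun t : ℝ => t ^ b) =O[𝓝[>] 0] fun t => t ^ a :=
  .of_bound' <| mem_of_superset (Ioo_mem_nhdsGT one_pos) fun t ht => by
    simpa [abs_of_pos (Real.rpow_pos_of_pos ht.1 _)]
      using Real.rpow_le_rpow_of_exponent_ge ht.1 ht.2.le h

lemma isBigO_rpow_nhdsGT_zero_iff {g : ℝ → ℝ} {δ : ℝ} :
    g =O[𝓝[>] 0] (fun t => t ^ δ) ↔
      ∃ C : ℝ, ∃ ε > (0 : ℝ), ∀ t ∈ Ioo (0 : ℝ) (min ε 2), |g t| ≤ C * t ^ δ := by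
  have h_abs : ∀ t ∈ Ioo (0 : ℝ) 2, |t ^ δ| = t ^ δ := fun t ht =>
    abs_of_pos (Real.rpow_pos_of_pos ht.1 δ)
  simp only [isBigO_iff, (nhdsGT_basis (0 : ℝ)).eventually_iff, Real.norm_eq_abs]
  constructor
  · rintro ⟨C, ε, hε, hC⟩
    refine ⟨C, ε, hε, fun t ht => ?_⟩
    rw [← h_abs t (Ioo_subset_Ioo_right (min_le_right ε 2) ht)]
    exact hC (Ioo_subset_Ioo_right (min_le_left ε 2) ht)
  · rintro ⟨C, ε, hε, hC⟩
    refine ⟨C, min ε 2, lt_min hε two_pos, fun t ht => ?_⟩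
    rw [h_abs t (Ioo_subset_Ioo_right (min_le_right ε 2) ht)]
    exact hC t ht

lemma mem_Rclass_iff {γ : ℝ} {f : ℝ → ℝ} :
    f ∈ Rclass γ ↔ ContDiffOn ℝ (⊤ : ℕ∞) f (Ioo 0 2) ∧
      ∀ m : ℕ, iteratedDerivWithin m f (Ioo 0 2) =O[𝓝[>] 0] fun t => t ^ (γ - m) := by
  simp only [Rclass, mem_ofPred_eq, isBigO_rpow_nhdsGT_zero_iff]

lemma Rclass_subset_Rclass {γ δ : ℝ} (h : γ ≤ δ) : Rclass δ ⊆ Rclass γ := by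
  intro f hf
  rw [mem_Rclass_iff] at hf ⊢
  exact ⟨hf.1, fun m => (hf.2 m).trans (isBigO_rpow_rpow_nhdsGT_zero (by linarith))⟩

lemma Rclass_congr {γ : ℝ} {f g : ℝ → ℝ} (hfg : EqOn f g (Ioo 0 2)) (hf : f ∈ Rclass γ) :
    g ∈ Rclass γ := by
  rw [mem_Rclass_iff] at hf ⊢
  refine ⟨hf.1.congr hfg.symm, fun m => (hf.2 m).congr' ?_ EventuallyEq.rfl⟩
  filter_upwards [Ioo_mem_nhdsGT two_pos] with t ht using iteratedDerivWithin_congr hfg ht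

lemma contDiffWithinAt_of_mem_Rclass {γ : ℝ} {f : ℝ → ℝ} (hf : f ∈ Rclass γ) (m : ℕ) {t : ℝ}
    (ht : t ∈ Ioo (0 : ℝ) 2) : ContDiffWithinAt ℝ m f (Ioo 0 2) t :=
  (hf.1 t ht).of_le (by exact_mod_cast le_top)

lemma zero_mem_Rclass (γ : ℝ) : (fun _ => 0) ∈ Rclass γ :=
  mem_Rclass_iff.2 ⟨contDiffOn_const, fun _ =>
    (isBigO_zero _ _).congr_left fun _ => by simp⟩

lemma add_mem_Rclass {γ : ℝ} {f g : ℝ → ℝ} (hf : f ∈ Rclass γ) (hg : g ∈ Rclass γ) :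
    (fun t => f t + g t) ∈ Rclass γ := by
  refine mem_Rclass_iff.2 ⟨hf.1.add hg.1, fun m => ?_⟩
  refine ((mem_Rclass_iff.1 hf).2 m |>.add ((mem_Rclass_iff.1 hg).2 m)).congr' ?_ EventuallyEq.rfl
  filter_upwards [Ioo_mem_nhdsGT two_pos] with t ht
  exact (iteratedDerivWithin_add ht (uniqueDiffOn_Ioo 0 2) (contDiffWithinAt_of_mem_Rclass hf m ht)
    (contDiffWithinAt_of_mem_Rclass hg m ht)).symm

lemma sum_mem_Rclass {γ : ℝ} {ι : Type*} (s : Finset ι) (g : ι → ℝ → ℝ)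
    (h : ∀ i ∈ s, g i ∈ Rclass γ) : (fun t => ∑ i ∈ s, g i t) ∈ Rclass γ := by
  classical
  induction s using Finset.induction_on with
  | empty => simpa using zero_mem_Rclass γ
  | insert i s hi ih =>
    simp only [Finset.sum_insert hi]
    exact add_mem_Rclass (h i (s.mem_insert_self i)) (ih fun j hj => h j (s.mem_insert_of_mem hj))

lemma mul_mem_Rclass {γ δ : ℝ} {f g : ℝ → ℝ} (hf : f ∈ Rclass γ) (hg : g ∈ Rclass δ) :
    (fun t => f t * g t) ∈ Rclass (γ + δ) := by
  refine mem_Rclass_iff.2 ⟨hf.1.mul hg.1, fun m => ?_⟩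
  have h_leibniz : iteratedDerivWithin m (fun t => f t * g t) (Ioo 0 2) =ᶠ[𝓝[>] 0]
      fun t => ∑ i ∈ Finset.range (m + 1), (m.choose i : ℝ) *
        iteratedDerivWithin i f (Ioo 0 2) t * iteratedDerivWithin (m - i) g (Ioo 0 2) t := by
    filter_upwards [Ioo_mem_nhdsGT two_pos] with t ht
    exact iteratedDerivWithin_mul ht (uniqueDiffOn_Ioo 0 2)
      (contDiffWithinAt_of_mem_Rclass hf m ht) (contDiffWithinAt_of_mem_Rclass hg m ht)
  refine h_leibniz.trans_isBigO (IsBigO.fun_sum fun i hi => ?_)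
  have h_pow : (fun t : ℝ => t ^ (γ - i) * t ^ (δ - (m - i : ℕ))) =ᶠ[𝓝[>] 0]
      fun t => t ^ (γ + δ - m) := by
    filter_upwards [self_mem_nhdsWithin] with t (ht : 0 < t)
    rw [← Real.rpow_add ht, Nat.cast_sub (Finset.mem_range_succ_iff.1 hi)]
    ring_nf
  exact ((((mem_Rclass_iff.1 hf).2 i).const_mul_left _).mul
    ((mem_Rclass_iff.1 hg).2 (m - i))).trans_eventuallyEq h_pow

lemma const_mul_rpow_mem_Rclass (a e : ℝ) : (fun t : ℝ => a * t ^ e) ∈ Rclass e := by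
  refine mem_Rclass_iff.2 ⟨contDiffOn_const.mul fun t ht =>
    (Real.contDiffAt_rpow_const_of_ne ht.1.ne').contDiffWithinAt, fun m => ?_⟩
  have h_deriv : iteratedDerivWithin m (fun t : ℝ => a * t ^ e) (Ioo 0 2) =ᶠ[𝓝[>] 0]
      fun t => (a * ∏ k ∈ Finset.range m, (e - k)) * t ^ (e - m) := by
    filter_upwards [Ioo_mem_nhdsGT two_pos] with t ht
    rw [iteratedDerivWithin_const_mul_field, iteratedDerivWithin_of_isOpen isOpen_Ioo ht,
      iteratedDeriv_rpow_const e m ht.1, mul_assoc]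
  exact h_deriv.trans_isBigO ((isBigO_refl _ _).const_mul_left _)

def IsPclassExponent (α β e : ℝ) : Prop :=
  ((∃ z : ℤ, e = z) → α < e) ∧ ((¬∃ z : ℤ, e = z) → β < e)

lemma IsPclassExponent.lt {α β e : ℝ} (h : IsPclassExponent α β e) (hαβ : α ≤ β) : α < e := by
  by_cases hz : ∃ z : ℤ, e = z
  · exact h.1 hz
  · exact hαβ.trans_lt (h.2 hz)

lemma IsPclassExponent.add {α₁ β₁ α₂ β₂ e₁ e₂ : ℝ} (h₁ : IsPclassExponent α₁ β₁ e₁)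
    (h₂ : IsPclassExponent α₂ β₂ e₂) (hαβ₁ : α₁ ≤ β₁) (hαβ₂ : α₂ ≤ β₂) :
    IsPclassExponent (α₁ + α₂) (min (α₁ + β₂) (α₂ + β₁)) (e₁ + e₂) := by
  refine ⟨fun _ => add_lt_add (h₁.lt hαβ₁) (h₂.lt hαβ₂), fun h_sum => ?_⟩
  by_cases hz₁ : ∃ z : ℤ, e₁ = z
  · have hz₂ : ¬∃ z : ℤ, e₂ = z := by
      rintro ⟨z₂, rfl⟩
      obtain ⟨z₁, rfl⟩ := hz₁
      exact h_sum ⟨z₁ + z₂, by push_cast; rfl⟩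
    exact (min_le_left _ _).trans_lt (add_lt_add (h₁.1 hz₁) (h₂.2 hz₂))
  · exact (min_le_right _ _).trans_lt (by linarith [h₁.2 hz₁, h₂.lt hαβ₂])

lemma mem_Pclass_iff {α β : ℝ} {f : ℝ → ℝ} :
    f ∈ Pclass α β ↔ ∃ (n : ℕ) (a e : Fin n → ℝ), (∀ i, IsPclassExponent α β (e i)) ∧
      ∀ t ∈ Ioo (0 : ℝ) 2, f t = ∑ i, a i * t ^ e i := by
  simp only [Pclass, IsPclassExponent, forall_and, and_assoc, mem_ofPred_eq]

lemma mem_Pclass_of_fintype {α β : ℝ} {f : ℝ → ℝ} {ι : Type*} [Fintype ι] (a e : ι → ℝ)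
    (he : ∀ i, IsPclassExponent α β (e i)) (hf : ∀ t ∈ Ioo (0 : ℝ) 2, f t = ∑ i, a i * t ^ e i) :
    f ∈ Pclass α β := by
  let σ := Fintype.equivFin ι
  refine mem_Pclass_iff.2 ⟨Fintype.card ι, a ∘ σ.symm, e ∘ σ.symm, fun i => he _, fun t ht => ?_⟩
  rw [hf t ht]
  exact (σ.symm.sum_comp fun i => a i * t ^ e i).symm

lemma mul_mem_Pclass {α₁ β₁ α₂ β₂ : ℝ} {p q : ℝ → ℝ} (hαβ₁ : α₁ ≤ β₁) (hαβ₂ : α₂ ≤ β₂)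
    (hp : p ∈ Pclass α₁ β₁) (hq : q ∈ Pclass α₂ β₂) :
    (fun t => p t * q t) ∈ Pclass (α₁ + α₂) (min (α₁ + β₂) (α₂ + β₁)) := by
  obtain ⟨n₁, a₁, e₁, he₁, hp⟩ := mem_Pclass_iff.1 hp
  obtain ⟨n₂, a₂, e₂, he₂, hq⟩ := mem_Pclass_iff.1 hq
  refine mem_Pclass_of_fintype (fun ij : Fin n₁ × Fin n₂ => a₁ ij.1 * a₂ ij.2)
    (fun ij => e₁ ij.1 + e₂ ij.2) (fun ij => (he₁ ij.1).add (he₂ ij.2) hαβ₁ hαβ₂) fun t ht => ?_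
  rw [hp t ht, hq t ht, Finset.sum_mul_sum, ← Finset.univ_product_univ, Finset.sum_product]
  refine Finset.sum_congr rfl fun i _ => Finset.sum_congr rfl fun j _ => ?_
  rw [Real.rpow_add ht.1]
  ring

lemma Pclass_subset_Rclass {α β : ℝ} (hαβ : α ≤ β) : Pclass α β ⊆ Rclass α := by
  intro p hp
  obtain ⟨n, a, e, he, hp⟩ := mem_Pclass_iff.1 hp
  refine Rclass_congr (fun t ht => (hp t ht).symm) (sum_mem_Rclass _ _ fun i _ => ?_)
  exact Rclass_subset_Rclass ((he i).lt hαβ).le (const_mul_rpow_mem_Rclass (a i) (e i))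

/-- product rule for `Q`: if `f_i ∈ Q_{α_i,β_i}` with `α_i ≤ β_i`, then
`f₁·f₂ ∈ Q_{α₁+α₂, min(α₁+β₂, α₂+β₁)}`. -/
theorem Qclass_mul (α₁ β₁ α₂ β₂ : ℝ) (hαβ₁ : α₁ ≤ β₁) (hαβ₂ : α₂ ≤ β₂)
    (f₁ f₂ : ℝ → ℝ) (h₁ : f₁ ∈ Qclass α₁ β₁) (h₂ : f₂ ∈ Qclass α₂ β₂) :
    (fun t => f₁ t * f₂ t) ∈ Qclass (α₁ + α₂) (min (α₁ + β₂) (α₂ + β₁)) := by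
  intro γ
  obtain ⟨p₁, hp₁, r₁, hr₁, hf₁⟩ := h₁ (max (γ - α₂) γ)
  obtain ⟨p₂, hp₂, r₂, hr₂, hf₂⟩ := h₂ (max (γ - α₁) 0)
  have hγ₁ := le_max_left (γ - α₂) γ
  have hγ₁' := le_max_right (γ - α₂) γ
  have hγ₂ := le_max_left (γ - α₁) 0
  have hγ₂' := le_max_right (γ - α₁) 0
  have hp₁r₂ := mul_mem_Rclass (Pclass_subset_Rclass hαβ₁ hp₁) hr₂
  have hr₁p₂ := mul_mem_Rclass hr₁ (Pclass_subset_Rclass hαβ₂ hp₂)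
  have hr₁r₂ := mul_mem_Rclass hr₁ hr₂
  refine ⟨fun t => p₁ t * p₂ t, mul_mem_Pclass hαβ₁ hαβ₂ hp₁ hp₂,
    fun t => p₁ t * r₂ t + r₁ t * p₂ t + r₁ t * r₂ t, ?_, fun t ht => ?_⟩
  · refine add_mem_Rclass (add_mem_Rclass ?_ ?_) ?_
    · exact Rclass_subset_Rclass (by linarith) hp₁r₂
    · exact Rclass_subset_Rclass (by linarith) hr₁p₂
    · exact Rclass_subset_Rclass (by linarith) hr₁r₂
  · beta_reduce
    rw [hf₁ t ht, hf₂ t ht]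
    ring
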